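/- arXiv:2405.20237 — 2 statements merged into one kernel-verified Lean document; each statement's English description precedes it below -/
import Mathlib

section
/- Let O be a Hermitian n×n complex matrix, V an n×n unitary matrix, U_1,…,U_K n×n unitary matrices, and α_1,…,α_K ≥ 0 with Σ_k α_k = 1. Suppose ‖U_k − V‖ ≤ ε₁ for every k and ‖Σ_k α_k U_k − V‖ ≤ ε₂, for some ε₁, ε₂ ≥ 0. Then for every n×n density matrix ρ, |Tr(O · (Σ_k α_k U_k ρ U_kᴴ − V ρ Vᴴ))| ≤ ‖O‖ (ε₁² + 2 ε₂). -/
/-!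
Write `D k = U k - V` and `Δ = ∑ k, α k • U k - V`. Since `∑ k, α k = 1`, the first-order terms
of `U k ρ (U k)ᴴ - V ρ Vᴴ` average out into `Δ`:
`∑ k, α k • U k ρ (U k)ᴴ - V ρ Vᴴ = ∑ k, α k • D k ρ (D k)ᴴ + Δ ρ Vᴴ + V ρ Δᴴ`.
For a density matrix `|tr (M ρ)| ≤ ‖M‖`, so by cyclicity of the trace the three terms contribute
at most `‖O‖ ε₁²`, `‖O‖ ε₂` and `‖O‖ ε₂`.
-/

open scoped Matrix.Norms.L2Operator ComplexOrder
open Matrix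

section StarAlgebra

variable {ι R A : Type*} [CommRing R] [StarRing R] [Ring A] [StarRing A] [Algebra R A]
  [StarModule R A]

theorem sum_smul_mul_mul_star_sub_eq (s : Finset ι) (a : ι → R) (ha : ∀ k, star (a k) = a k)
    (ha₁ : ∑ k ∈ s, a k = 1) (U : ι → A) (V ρ : A) :
    ∑ k ∈ s, a k • (U k * ρ * star (U k)) - V * ρ * star V =
      ∑ k ∈ s, a k • ((U k - V) * ρ * star (U k - V)) + (∑ k ∈ s, a k • U k - V) * ρ * star V +
        V * ρ * star (∑ k ∈ s, a k • U k - V) := by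
  have hΔ : ∑ k ∈ s, a k • U k - V = ∑ k ∈ s, a k • (U k - V) := by
    simp only [smul_sub, Finset.sum_sub_distrib, ← Finset.sum_smul, ha₁, one_smul]
  have hterm (k : ι) : U k * ρ * star (U k) - V * ρ * star V =
      (U k - V) * ρ * star (U k - V) + (U k - V) * ρ * star V + V * ρ * star (U k - V) := by
    simp only [star_sub]
    noncomm_ring
  calc ∑ k ∈ s, a k • (U k * ρ * star (U k)) - V * ρ * star V
      = ∑ k ∈ s, a k • (U k * ρ * star (U k) - V * ρ * star V) := by
        simp only [smul_sub, Finset.sum_sub_distrib, ← Finset.sum_smul, ha₁, one_smul]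
    _ = _ := by
        simp only [hterm, hΔ, smul_add, Finset.sum_add_distrib, Finset.sum_mul, Finset.mul_sum,
          star_sum, star_smul, ha, smul_mul_assoc, mul_smul_comm]

end StarAlgebra

theorem CStarRing.norm_le_one_of_star_mul_self_eq_one {E : Type*} [NormedRing E] [StarRing E]
    [CStarRing E] {V : E} (hV : star V * V = 1) : ‖V‖ ≤ 1 := by
  have hV' : ‖V‖ * ‖V‖ = ‖(1 : E)‖ := by rw [← CStarRing.norm_star_mul_self, hV]
  have h1 : ‖(1 : E)‖ * ‖(1 : E)‖ = ‖(1 : E)‖ := by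
    rw [← CStarRing.norm_star_mul_self, star_one, one_mul]
  have h1le : ‖(1 : E)‖ ≤ 1 := by nlinarith [norm_nonneg (1 : E)]
  nlinarith [norm_nonneg V]

namespace Matrix

variable {n 𝕜 : Type*} [Fintype n] [DecidableEq n] [RCLike 𝕜]

theorem norm_mulVec_dotProduct_star_le (M : Matrix n n 𝕜) (x : EuclideanSpace 𝕜 n) :
    ‖M *ᵥ x.ofLp ⬝ᵥ star x.ofLp‖ ≤ ‖M‖ * ‖x‖ ^ 2 := by
  calc ‖M *ᵥ x.ofLp ⬝ᵥ star x.ofLp‖ = ‖inner 𝕜 x (toEuclideanCLM (𝕜 := 𝕜) M x)‖ := rfl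
    _ ≤ ‖x‖ * (‖M‖ * ‖x‖) := by
        grw [norm_inner_le_norm, ContinuousLinearMap.le_opNorm]
        rfl
    _ = ‖M‖ * ‖x‖ ^ 2 := by ring

theorem norm_trace_mul_le_of_posSemidef (M : Matrix n n 𝕜) {ρ : Matrix n n 𝕜}
    (hρ : ρ.PosSemidef) : ‖(M * ρ).trace‖ ≤ ‖M‖ * RCLike.re ρ.trace := by
  obtain ⟨m, v, rfl⟩ := posSemidef_iff_eq_sum_vecMulVec.mp hρ
  have hv (i : Fin m) := norm_mulVec_dotProduct_star_le M (WithLp.toLp 2 (v i))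
  simp only [Finset.mul_sum, trace_sum, mul_vecMulVec, trace_vecMulVec, map_sum]
  refine (norm_sum_le _ _).trans (Finset.sum_le_sum fun i _ => (hv i).trans_eq ?_)
  rw [← EuclideanSpace.inner_toLp_toLp, inner_self_eq_norm_sq]

theorem norm_trace_mul_mul_mul_conjTranspose_le (O A B : Matrix n n 𝕜) {ρ : Matrix n n 𝕜}
    (hρ : ρ.PosSemidef) :
    ‖(O * (A * ρ * Bᴴ)).trace‖ ≤ ‖B‖ * ‖O‖ * ‖A‖ * RCLike.re ρ.trace := by
  have hcyc : (O * (A * ρ * Bᴴ)).trace = (Bᴴ * O * A * ρ).trace := by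
    rw [← Matrix.mul_assoc, trace_mul_comm, ← Matrix.mul_assoc, ← Matrix.mul_assoc]
  have hnorm : ‖Bᴴ * O * A‖ ≤ ‖B‖ * ‖O‖ * ‖A‖ := by
    grw [l2_opNorm_mul, l2_opNorm_mul, l2_opNorm_conjTranspose]
  rw [hcyc]
  grw [norm_trace_mul_le_of_posSemidef _ hρ, hnorm]
  exact (RCLike.nonneg_iff.mp hρ.trace_nonneg).1

end Matrix

theorem mixing_lemma_prediction_error_general {n K : ℕ}
    (O V : Matrix (Fin n) (Fin n) ℂ) (hV : Vᴴ * V = 1)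
    (U : Fin K → Matrix (Fin n) (Fin n) ℂ)
    (α : Fin K → ℝ) (hα : ∀ k, 0 ≤ α k) (hαsum : ∑ k, α k = 1)
    (ε₁ ε₂ : ℝ)
    (hclose : ∀ k, ‖U k - V‖ ≤ ε₁)
    (hlcu : ‖(∑ k, (α k : ℂ) • U k) - V‖ ≤ ε₂)
    (ρ : Matrix (Fin n) (Fin n) ℂ) (hρ : ρ.PosSemidef ∧ ρ.trace = 1) :
    ‖(O * ((∑ k, (α k : ℂ) • (U k * ρ * (U k)ᴴ)) - V * ρ * Vᴴ)).trace‖ ≤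
      ‖O‖ * (ε₁ ^ 2 + 2 * ε₂) := by
  obtain ⟨hρ, hρ₁⟩ := hρ
  have bound (A B : Matrix (Fin n) (Fin n) ℂ) : ‖(O * (A * ρ * Bᴴ)).trace‖ ≤ ‖B‖ * ‖O‖ * ‖A‖ := by
    simpa [hρ₁] using norm_trace_mul_mul_mul_conjTranspose_le O A B hρ
  have hVn : ‖V‖ ≤ 1 := CStarRing.norm_le_one_of_star_mul_self_eq_one hV
  have hdecomp := sum_smul_mul_mul_star_sub_eq Finset.univ (fun k => (α k : ℂ))
    (fun k => Complex.conj_ofReal _) (by exact_mod_cast hαsum) U V ρ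
  simp only [star_eq_conjTranspose] at hdecomp
  rw [hdecomp, Matrix.mul_add, Matrix.mul_add, trace_add, trace_add, Finset.mul_sum, trace_sum]
  set Δ := (∑ k, (α k : ℂ) • U k) - V
  have hmix : ‖∑ k, (O * ((α k : ℂ) • ((U k - V) * ρ * (U k - V)ᴴ))).trace‖ ≤ ‖O‖ * ε₁ ^ 2 := by
    have hterm (k : Fin K) :
        (O * ((U k - V) * ρ * (U k - V)ᴴ)).trace ∈ Metric.closedBall 0 (‖O‖ * ε₁ ^ 2) := by
      rw [mem_closedBall_zero_iff]
      calc _ ≤ ‖U k - V‖ * ‖O‖ * ‖U k - V‖ := bound _ _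
        _ = ‖O‖ * ‖U k - V‖ ^ 2 := by ring
        _ ≤ ‖O‖ * ε₁ ^ 2 := by gcongr; exact hclose k
    simp only [Matrix.mul_smul, trace_smul, Complex.coe_smul]
    simpa using (convex_closedBall _ _).sum_mem (fun k _ => hα k) hαsum (fun k _ => hterm k)
  have hleft : ‖(O * (Δ * ρ * Vᴴ)).trace‖ ≤ ‖O‖ * ε₂ := by
    grw [bound, hVn, hlcu, one_mul]
  have hright : ‖(O * (V * ρ * Δᴴ)).trace‖ ≤ ‖O‖ * ε₂ := by
    grw [bound, hVn, hlcu, mul_one, mul_comm]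
  calc _ ≤ ‖O‖ * ε₁ ^ 2 + ‖O‖ * ε₂ + ‖O‖ * ε₂ := by
        grw [norm_add_le, norm_add_le, hmix, hleft, hright]
    _ = ‖O‖ * (ε₁ ^ 2 + 2 * ε₂) := by ring

/-- **Hastings–Campbell Mixing lemma**, prediction-error form: if each unitary `U k` is
`ε₁`-close to the target unitary `V` and the convex combination `∑ k, α k • U k` is
`ε₂`-close to `V` (L2 operator norm), then the mixed-unitary channel's expectation value
of a Hermitian observable `O` on any density matrix `ρ` deviates from the target by at
most `‖O‖ (ε₁² + 2 ε₂)`. -/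
theorem mixing_lemma_prediction_error {n K : ℕ}
    (O V : Matrix (Fin n) (Fin n) ℂ) (hO : O.IsHermitian) (hV : Vᴴ * V = 1)
    (U : Fin K → Matrix (Fin n) (Fin n) ℂ) (hU : ∀ k, (U k)ᴴ * U k = 1)
    (α : Fin K → ℝ) (hα : ∀ k, 0 ≤ α k) (hαsum : ∑ k, α k = 1)
    (ε₁ ε₂ : ℝ) (hε₁ : 0 ≤ ε₁) (hε₂ : 0 ≤ ε₂)
    (hclose : ∀ k, ‖U k - V‖ ≤ ε₁)
    (hlcu : ‖(∑ k, (α k : ℂ) • U k) - V‖ ≤ ε₂)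
    (ρ : Matrix (Fin n) (Fin n) ℂ) (hρ : ρ.PosSemidef ∧ ρ.trace = 1) :
    ‖(O * ((∑ k, (α k : ℂ) • (U k * ρ * (U k)ᴴ)) - V * ρ * Vᴴ)).trace‖ ≤
      ‖O‖ * (ε₁ ^ 2 + 2 * ε₂) :=
  mixing_lemma_prediction_error_general O V hV U α hα hαsum ε₁ ε₂ hclose hlcu ρ hρ
end

section
/- Let Q be a Hermitian n×n complex matrix with Q³ = Q, and let d₁, d₂, a, b be real numbers satisfying d₁ sin a − d₂ sin b = 1/2 and d₁ sin(2a) − d₂ sin(2b) = 1. For an n×n complex matrix B define C(t) := exp(itQ) B exp(−itQ). Then for every B: −i(BQ − QB) = d₁ (C(a) − C(−a)) − d₂ (C(b) − C(−b)). In particular the hypotheses hold for d₁ = 1, d₂ = (√2 − 1)/2, a = π/4, b = π/2. -/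
/-!
Since `Q³ = Q`, odd powers of `Q` equal `Q` and nonzero even powers equal `Q²`, so the
exponential series splits into the cosine and sine series:
`exp (itQ) = 1 + i sin t • Q + (cos t - 1) • Q²`.
Hence `C(t) - C(-t) = 2i sin t • [Q, B] + 2i sin t (cos t - 1) • (QBQ² - Q²BQ)`, and by
`sin 2t = 2 sin t cos t` the two conditions on `d₁, d₂, a, b` say exactly that in the
combination the coefficient of `[Q, B]` is `i` and that of `QBQ² - Q²BQ` vanishes.
-/

open Matrix Real NormedSpace

section Tripotent

variable {M : Type*} [Monoid M] {q : M}

theorem pow_two_mul_add_one_eq_self_of_pow_three (hq : q ^ 3 = q) (k : ℕ) :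
    q ^ (2 * k + 1) = q := by
  induction k with
  | zero => simp
  | succ k ih => rw [show 2 * (k + 1) + 1 = 2 + (2 * k + 1) by ring, pow_add, ih, ← pow_succ, hq]

theorem pow_two_mul_succ_eq_sq_of_pow_three (hq : q ^ 3 = q) (k : ℕ) :
    q ^ (2 * (k + 1)) = q ^ 2 := by
  rw [mul_add_one, pow_succ, pow_two_mul_add_one_eq_self_of_pow_three hq, sq]

end Tripotent

theorem exp_I_mul_smul_of_pow_three {A : Type*} [Ring A] [Algebra ℂ A] [TopologicalSpace A]
    [IsTopologicalRing A] [ContinuousSMul ℂ A] [T2Space A] {Q : A} (hQ : Q ^ 3 = Q) (z : ℂ) :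
    exp ((Complex.I * z) • Q) =
      1 + (Complex.I * Complex.sin z) • Q + (Complex.cos z - 1) • Q ^ 2 := by
  suffices h : HasSum (fun m : ℕ ↦ ((m.factorial : ℂ)⁻¹) • ((Complex.I * z) • Q) ^ m)
      ((Complex.cos z • Q ^ 2 + (1 - Q ^ 2)) + (Complex.I * Complex.sin z) • Q) by
    rw [exp_eq_tsum ℂ]
    exact h.tsum_eq.trans (by rw [sub_smul, one_smul]; abel)
  refine HasSum.even_add_odd ?_ ?_
  · refine (((Complex.hasSum_cos z).smul_const (Q ^ 2)).add
      (hasSum_ite_eq 0 (1 - Q ^ 2))).congr_fun fun k ↦ ?_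
    rcases k with _ | k
    · simp
    · have hz : (Complex.I * z) ^ (2 * (k + 1)) = (-1) ^ (k + 1) * z ^ (2 * (k + 1)) := by
        rw [mul_pow, pow_mul, Complex.I_sq]
      simp only [smul_pow, pow_two_mul_succ_eq_sq_of_pow_three hQ, smul_smul, hz,
        Nat.succ_ne_zero, if_false, add_zero]
      congr 1
      field_simp
  · refine (((Complex.hasSum_sin z).mul_left Complex.I).smul_const Q).congr_fun fun k ↦ ?_
    have hz : (Complex.I * z) ^ (2 * k + 1) = Complex.I * ((-1) ^ k * z ^ (2 * k + 1)) := by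
      rw [mul_pow, pow_succ, pow_mul, Complex.I_sq]
      ring
    simp only [smul_pow, pow_two_mul_add_one_eq_self_of_pow_three hQ, smul_smul, hz]
    congr 1
    field_simp

theorem conj_sub_conj_neg {R A : Type*} [CommRing R] [Ring A] [Algebra R A] (Q B : A) (s c : R) :
    (1 + s • Q + c • Q ^ 2) * B * (1 + (-s) • Q + c • Q ^ 2)
        - (1 + (-s) • Q + c • Q ^ 2) * B * (1 + s • Q + c • Q ^ 2) =
      (2 * s) • (Q * B - B * Q) + (2 * (s * c)) • (Q * B * Q ^ 2 - Q ^ 2 * B * Q) := by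
  simp only [mul_add, add_mul, smul_mul_assoc, mul_smul_comm, smul_smul,
    one_mul, mul_one, smul_sub, smul_add, neg_smul, neg_mul, mul_neg]
  module

theorem exp_conj_sub_exp_conj_neg_of_pow_three {A : Type*} [Ring A] [Algebra ℂ A]
    [TopologicalSpace A] [IsTopologicalRing A] [ContinuousSMul ℂ A] [T2Space A] {Q : A}
    (hQ : Q ^ 3 = Q) (B : A) (z : ℂ) :
    exp ((Complex.I * z) • Q) * B * exp ((-(Complex.I * z)) • Q)
        - exp ((Complex.I * -z) • Q) * B * exp ((-(Complex.I * -z)) • Q) =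
      (2 * (Complex.I * Complex.sin z)) • (Q * B - B * Q) +
        (2 * (Complex.I * Complex.sin z * (Complex.cos z - 1))) •
          (Q * B * Q ^ 2 - Q ^ 2 * B * Q) := by
  have h_pos := exp_I_mul_smul_of_pow_three hQ z
  have h_neg := exp_I_mul_smul_of_pow_three hQ (-z)
  rw [mul_neg, Complex.sin_neg, Complex.cos_neg, mul_neg] at h_neg
  rw [mul_neg, neg_neg, h_pos, h_neg]
  exact conj_sub_conj_neg (R := ℂ) Q B _ _

theorem parameter_shift_commutator_extraction_general {n : ℕ}
    (Q : Matrix (Fin n) (Fin n) ℂ) (hQ3 : Q ^ 3 = Q)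
    (d₁ d₂ a b : ℝ)
    (h1 : d₁ * Real.sin a - d₂ * Real.sin b = 1 / 2)
    (h2 : d₁ * Real.sin (2 * a) - d₂ * Real.sin (2 * b) = 1)
    (C : Matrix (Fin n) (Fin n) ℂ → ℝ → Matrix (Fin n) (Fin n) ℂ)
    (hC : ∀ B t, C B t = NormedSpace.exp ((Complex.I * (t : ℂ)) • Q) * B *
        NormedSpace.exp ((-(Complex.I * (t : ℂ))) • Q)) :
    (∀ B : Matrix (Fin n) (Fin n) ℂ,
        (-Complex.I) • (B * Q - Q * B) =
          (d₁ : ℂ) • (C B a - C B (-a)) - (d₂ : ℂ) • (C B b - C B (-b))) ∧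
      ((1 : ℝ) * Real.sin (π / 4) - (Real.sqrt 2 - 1) / 2 * Real.sin (π / 2) = 1 / 2 ∧
        (1 : ℝ) * Real.sin (2 * (π / 4)) - (Real.sqrt 2 - 1) / 2 * Real.sin (2 * (π / 2)) = 1) := by
  have h1' : (d₁ : ℂ) * Complex.sin a - d₂ * Complex.sin b = 1 / 2 := by
    simpa using congrArg Complex.ofReal h1
  have h2' : (d₁ : ℂ) * (2 * Complex.sin a * Complex.cos a)
      - d₂ * (2 * Complex.sin b * Complex.cos b) = 1 := by
    rw [← Complex.sin_two_mul, ← Complex.sin_two_mul]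
    exact_mod_cast h2
  refine ⟨fun B ↦ ?_, ?_, ?_⟩
  · simp only [hC, Complex.ofReal_neg, exp_conj_sub_exp_conj_neg_of_pow_three hQ3]
    match_scalars
    · linear_combination 2 * Complex.I * h1'
    · linear_combination -2 * Complex.I * h1'
    · linear_combination 2 * Complex.I * h1' - Complex.I * h2'
    · linear_combination Complex.I * h2' - 2 * Complex.I * h1'
  · rw [Real.sin_pi_div_four, Real.sin_pi_div_two]
    ring
  · rw [show 2 * (π / 4) = π / 2 by ring, show 2 * (π / 2) = π by ring, Real.sin_pi_div_two,
      Real.sin_pi]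
    ring

/-- Commutator-extraction identity behind the four-term parameter-shift rule for
tripotent Hermitian generators (`Q³ = Q`): if the real coefficients satisfy
`d₁ sin a − d₂ sin b = 1/2` and `d₁ sin 2a − d₂ sin 2b = 1`, then for every `B`,
`−i[B,Q] = d₁ (C(a) − C(−a)) − d₂ (C(b) − C(−b))` where
`C(t) = e^{itQ} B e^{−itQ}`. In particular the hypotheses hold for
`d₁ = 1`, `d₂ = (√2 − 1)/2`, `a = π/4`, `b = π/2`. -/
theorem parameter_shift_commutator_extraction {n : ℕ}
    (Q : Matrix (Fin n) (Fin n) ℂ) (hQherm : Qᴴ = Q) (hQ3 : Q ^ 3 = Q)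
    (d₁ d₂ a b : ℝ)
    (h1 : d₁ * Real.sin a - d₂ * Real.sin b = 1 / 2)
    (h2 : d₁ * Real.sin (2 * a) - d₂ * Real.sin (2 * b) = 1)
    (C : Matrix (Fin n) (Fin n) ℂ → ℝ → Matrix (Fin n) (Fin n) ℂ)
    (hC : ∀ B t, C B t = NormedSpace.exp ((Complex.I * (t : ℂ)) • Q) * B *
        NormedSpace.exp ((-(Complex.I * (t : ℂ))) • Q)) :
    (∀ B : Matrix (Fin n) (Fin n) ℂ,
        (-Complex.I) • (B * Q - Q * B) =
          (d₁ : ℂ) • (C B a - C B (-a)) - (d₂ : ℂ) • (C B b - C B (-b))) ∧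
      ((1 : ℝ) * Real.sin (π / 4) - (Real.sqrt 2 - 1) / 2 * Real.sin (π / 2) = 1 / 2 ∧
        (1 : ℝ) * Real.sin (2 * (π / 4)) - (Real.sqrt 2 - 1) / 2 * Real.sin (2 * (π / 2)) = 1) :=
  parameter_shift_commutator_extraction_general Q hQ3 d₁ d₂ a b h1 h2 C hC
end
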